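/- Let w1 = exp((π/2)·(X_{α1} − X_{−α1})) and w2 = exp((π/2)·(X_{α2} − X_{−α2})), where exp is the matrix exponential. Then w1·H1·w1^{−1} = H2, w1·H2·w1^{−1} = H1, w2·H1·w2^{−1} = H1, and w2·H2·w2^{−1} = −H2. -/

import Mathlib

/-!
For `K = X_α − X_{−α}` one has `K³ = −K`, so the powers of `K` cycle through `±K, ±K²` and the
exponential series splits into the sine and cosine series:
`exp (t • K) = 1 + sin t • K + (1 − cos t) • K²`. At `t = π/2` this gives `w = 1 + K + K²`, which
for both simple roots is a signed permutation matrix; the conjugation formulas are then a direct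
computation.
-/

namespace Stmt15

noncomputable section

open Matrix

/-- `E a b` is the 4×4 real matrix with a single 1 in position `(a,b)`. -/
def E (a b : Fin 4) : Matrix (Fin 4) (Fin 4) ℝ := Matrix.single a b 1

def H1 : Matrix (Fin 4) (Fin 4) ℝ := E 0 0 - E 2 2
def H2 : Matrix (Fin 4) (Fin 4) ℝ := E 1 1 - E 3 3
def Xa1 : Matrix (Fin 4) (Fin 4) ℝ := E 0 1 - E 3 2
def Xa2 : Matrix (Fin 4) (Fin 4) ℝ := E 1 3

/-- The simple Weyl reflection `w_{α1} = exp((π/2)(X_{α1} − X_{−α1}))`. -/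
def w1 : Matrix (Fin 4) (Fin 4) ℝ := NormedSpace.exp ((Real.pi / 2) • (Xa1 - Xa1ᵀ))

/-- The simple Weyl reflection `w_{α2} = exp((π/2)(X_{α2} − X_{−α2}))`. -/
def w2 : Matrix (Fin 4) (Fin 4) ℝ := NormedSpace.exp ((Real.pi / 2) • (Xa2 - Xa2ᵀ))

open scoped Nat

section PowThreeEqNeg

variable {𝔸 : Type*} [Ring 𝔸] [Algebra ℝ 𝔸] {a : 𝔸}

theorem pow_two_mul_add_one_of_pow_three_eq_neg (h : a ^ 3 = -a) (k : ℕ) :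
    a ^ (2 * k + 1) = ((-1 : ℝ) ^ k) • a := by
  induction k with
  | zero => simp
  | succ k ih =>
    rw [show 2 * (k + 1) + 1 = 2 + (2 * k + 1) by ring, pow_add, ih, mul_smul_comm, ← pow_succ, h,
      pow_succ, mul_neg_one, neg_smul, smul_neg]

theorem pow_two_mul_succ_of_pow_three_eq_neg (h : a ^ 3 = -a) (k : ℕ) :
    a ^ (2 * (k + 1)) = ((-1 : ℝ) ^ k) • a ^ 2 := by
  rw [mul_add_one, pow_succ, pow_two_mul_add_one_of_pow_three_eq_neg h, smul_mul_assoc, ← sq]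

variable [TopologicalSpace 𝔸] [IsTopologicalRing 𝔸] [ContinuousSMul ℝ 𝔸] [T2Space 𝔸]

theorem exp_smul_of_pow_three_eq_neg (h : a ^ 3 = -a) (t : ℝ) :
    NormedSpace.exp (t • a) = 1 + Real.sin t • a + (1 - Real.cos t) • a ^ 2 := by
  set f : ℕ → 𝔸 := fun n => (n ! : ℝ)⁻¹ • (t • a) ^ n with hf
  have hodd : HasSum (fun k => f (2 * k + 1)) (Real.sin t • a) := by
    convert (Real.hasSum_sin t).smul_const a using 2
    simp only [hf, smul_pow, pow_two_mul_add_one_of_pow_three_eq_neg h, smul_smul]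
    congr 1
    field_simp
  -- Only the `k = 0` term of the cosine series escapes the factor `a²`.
  have hcos_tail := (hasSum_nat_add_iff' 1).mpr (Real.hasSum_cos t)
  have heven_tail : HasSum (fun k => f (2 * (k + 1))) ((1 - Real.cos t) • a ^ 2) := by
    convert hcos_tail.neg.smul_const (a ^ 2) using 2
    · simp only [hf, smul_pow, pow_two_mul_succ_of_pow_three_eq_neg h, smul_smul]
      congr 1
      field_simp
      ring
    · simp
  have heven : HasSum (fun k => f (2 * k)) ((1 - Real.cos t) • a ^ 2 + 1) := by
    simpa [hf] using (hasSum_nat_add_iff (f := fun k => f (2 * k)) 1).mp heven_tail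
  rw [NormedSpace.exp_eq_tsum ℝ]
  change ∑' n, f n = _
  rw [(heven.even_add_odd hodd).tsum_eq]
  abel

theorem exp_pi_div_two_smul_of_pow_three_eq_neg (h : a ^ 3 = -a) :
    NormedSpace.exp ((Real.pi / 2) • a) = 1 + a + a ^ 2 := by
  simp [exp_smul_of_pow_three_eq_neg h]

end PowThreeEqNeg

theorem H1_eq : H1 = !![1, 0, 0, 0; 0, 0, 0, 0; 0, 0, -1, 0; 0, 0, 0, 0] := by
  ext i j; fin_cases i <;> fin_cases j <;> simp [H1, E]

theorem H2_eq : H2 = !![0, 0, 0, 0; 0, 1, 0, 0; 0, 0, 0, 0; 0, 0, 0, -1] := by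
  ext i j; fin_cases i <;> fin_cases j <;> simp [H2, E]

theorem Xa1_sub_transpose_eq :
    Xa1 - Xa1ᵀ = !![0, 1, 0, 0; -1, 0, 0, 0; 0, 0, 0, 1; 0, 0, -1, 0] := by
  ext i j; fin_cases i <;> fin_cases j <;> simp [Xa1, E]

theorem Xa2_sub_transpose_eq :
    Xa2 - Xa2ᵀ = !![0, 0, 0, 0; 0, 0, 0, 1; 0, 0, 0, 0; 0, -1, 0, 0] := by
  ext i j; fin_cases i <;> fin_cases j <;> simp [Xa2, E]

theorem Xa1_sub_transpose_pow_three : (Xa1 - Xa1ᵀ) ^ 3 = -(Xa1 - Xa1ᵀ) := by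
  rw [Xa1_sub_transpose_eq]
  ext i j; fin_cases i <;> fin_cases j <;> simp [pow_succ, mul_apply, Fin.sum_univ_four]

theorem Xa2_sub_transpose_pow_three : (Xa2 - Xa2ᵀ) ^ 3 = -(Xa2 - Xa2ᵀ) := by
  rw [Xa2_sub_transpose_eq]
  ext i j; fin_cases i <;> fin_cases j <;> simp [pow_succ, mul_apply, Fin.sum_univ_four]

theorem w1_eq : w1 = !![0, 1, 0, 0; -1, 0, 0, 0; 0, 0, 0, 1; 0, 0, -1, 0] := by
  rw [w1, exp_pi_div_two_smul_of_pow_three_eq_neg Xa1_sub_transpose_pow_three,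
    Xa1_sub_transpose_eq]
  ext i j; fin_cases i <;> fin_cases j <;> simp [sq]

theorem w2_eq : w2 = !![1, 0, 0, 0; 0, 0, 0, 1; 0, 0, 1, 0; 0, -1, 0, 0] := by
  rw [w2, exp_pi_div_two_smul_of_pow_three_eq_neg Xa2_sub_transpose_pow_three,
    Xa2_sub_transpose_eq]
  ext i j; fin_cases i <;> fin_cases j <;> simp [sq, one_apply]

theorem w1_inv_eq : w1⁻¹ = !![0, -1, 0, 0; 1, 0, 0, 0; 0, 0, 0, -1; 0, 0, 1, 0] := by
  refine inv_eq_right_inv ?_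
  rw [w1_eq]
  ext i j; fin_cases i <;> fin_cases j <;> simp [mul_apply, Fin.sum_univ_four, one_apply]

theorem w2_inv_eq : w2⁻¹ = !![1, 0, 0, 0; 0, 0, 0, -1; 0, 0, 1, 0; 0, 1, 0, 0] := by
  refine inv_eq_right_inv ?_
  rw [w2_eq]
  ext i j; fin_cases i <;> fin_cases j <;> simp [mul_apply, Fin.sum_univ_four, one_apply]

/-- The simple Weyl reflections of `Sp(4,ℝ)` act on the split Cartan subalgebra by
`w1 : H1 ↔ H2` and `w2 : H1 ↦ H1, H2 ↦ −H2`. -/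
theorem stmt_15 :
    w1 * H1 * w1⁻¹ = H2 ∧ w1 * H2 * w1⁻¹ = H1 ∧
      w2 * H1 * w2⁻¹ = H1 ∧ w2 * H2 * w2⁻¹ = -H2 := by
  rw [w1_inv_eq, w2_inv_eq, w1_eq, w2_eq, H1_eq, H2_eq]
  refine ⟨?_, ?_, ?_, ?_⟩ <;>
    ext i j <;> fin_cases i <;> fin_cases j <;> simp [mul_apply, Fin.sum_univ_four]

end

end Stmt15
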